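/- For $2 < p < \frac{n+1}{2}$ and $n \ge 4$, the quantity $c_1 - p\,c_2 = \int_{\mathbb{R}^{n-1}} \frac{|z|^2\big(|z|^{p/(p-1)} - (p-1)\big)}{(1+|z|^{p/(p-1)})^n}\,dz$ is strictly positive. -/

import Mathlib

open Real MeasureTheory Set Filter

private lemma contOn_aux (n : ℕ) (q a : ℝ) :
    ContinuousOn (fun r : ℝ => r ^ a / (1 + r ^ q) ^ (n : ℝ)) (Ioi 0) := by
  intro r hr
  have hr0 : (0:ℝ) < r := hr
  have h1 : ContinuousAt (fun r : ℝ => r ^ a) r :=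
    Real.continuousAt_rpow_const r a (Or.inl hr0.ne')
  have hb : (0:ℝ) < 1 + r ^ q := by positivity
  have h2 : ContinuousAt (fun r : ℝ => (1 + r ^ q) ^ (n : ℝ)) r := by
    have hi : ContinuousAt (fun r : ℝ => 1 + r ^ q) r :=
      continuousAt_const.add (Real.continuousAt_rpow_const r q (Or.inl hr0.ne'))
    exact hi.rpow_const (Or.inl hb.ne')
  exact (h1.div h2 (by positivity)).continuousWithinAt

private lemma intOn_aux (n : ℕ) (q a : ℝ) (ha : 0 ≤ a)
    (h : a - n * q < -1) :
    IntegrableOn (fun r : ℝ => r ^ a / (1 + r ^ q) ^ (n : ℝ)) (Ioi 0) := by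
  rw [← Ioc_union_Ioi_eq_Ioi (zero_le_one : (0:ℝ) ≤ 1), integrableOn_union]
  constructor
  · apply Integrable.mono' (g := fun _ : ℝ => (1:ℝ)) (integrableOn_const (by simp))
    · exact ((contOn_aux n q a).mono Ioc_subset_Ioi_self).aestronglyMeasurable
        measurableSet_Ioc
    · filter_upwards [ae_restrict_mem measurableSet_Ioc] with x hx
      have hx0 : (0:ℝ) < x := hx.1
      have hd : (1:ℝ) ≤ (1 + x ^ q) ^ (n : ℝ) := by
        calc (1:ℝ) = 1 ^ (n:ℝ) := (Real.one_rpow _).symm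
        _ ≤ (1 + x ^ q) ^ (n:ℝ) := by
            apply Real.rpow_le_rpow zero_le_one _ (by positivity)
            nlinarith [Real.rpow_nonneg hx0.le q]
      rw [Real.norm_eq_abs, abs_of_nonneg (by positivity)]
      calc x ^ a / (1 + x ^ q) ^ (n:ℝ) ≤ x ^ a / 1 := by gcongr
      _ = x ^ a := div_one _
      _ ≤ 1 := Real.rpow_le_one hx0.le hx.2 ha
  · have hg : IntegrableOn (fun r : ℝ => r ^ (a - n * q)) (Ioi 1) :=
      integrableOn_Ioi_rpow_of_lt h one_pos
    apply hg.integrable.mono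
      (((contOn_aux n q a).mono (Ioi_subset_Ioi zero_le_one)).aestronglyMeasurable
        measurableSet_Ioi)
    filter_upwards [ae_restrict_mem measurableSet_Ioi] with x hx
    have hx0 : (0:ℝ) < x := lt_trans one_pos hx
    rw [Real.norm_eq_abs, Real.norm_eq_abs, abs_of_nonneg (by positivity),
      abs_of_nonneg (Real.rpow_nonneg hx0.le _)]
    calc x ^ a / (1 + x ^ q) ^ (n:ℝ) ≤ x ^ a / (x ^ q) ^ (n:ℝ) := by
          exact div_le_div_of_nonneg_left (by positivity) (by positivity)
            (Real.rpow_le_rpow (by positivity) (by linarith) (by positivity))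
    _ = x ^ (a - n * q) := by
        rw [← Real.rpow_mul hx0.le, ← Real.rpow_sub hx0]
        ring_nf

private lemma ftc_aux (n : ℕ) (q : ℝ) (hn : 4 ≤ n) (hq1 : 1 < q)
    (hqn : (n:ℝ) + 1 < ((n:ℝ) - 1) * q) :
    ((n:ℝ) + 1) * (∫ r in Ioi (0:ℝ), r ^ (n:ℝ) / (1 + r ^ q) ^ (n:ℝ))
      + (((n:ℝ) + 1) - ((n:ℝ) - 1) * q)
        * (∫ r in Ioi (0:ℝ), r ^ ((n:ℝ) + q) / (1 + r ^ q) ^ (n:ℝ)) = 0 := by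
  have hq0 : (0:ℝ) < q := lt_trans one_pos hq1
  have hn4 : (4:ℝ) ≤ n := by exact_mod_cast hn
  set c₁ : ℝ := (n:ℝ) + 1 with hc₁
  set c₂ : ℝ := 1 - (n:ℝ) with hc₂
  have hA : IntegrableOn (fun r : ℝ => r ^ (n:ℝ) / (1 + r ^ q) ^ (n:ℝ)) (Ioi 0) :=
    intOn_aux n q (n:ℝ) (by positivity) (by nlinarith)
  have hB : IntegrableOn (fun r : ℝ => r ^ ((n:ℝ) + q) / (1 + r ^ q) ^ (n:ℝ)) (Ioi 0) :=
    intOn_aux n q ((n:ℝ) + q) (by positivity) (by nlinarith)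
  set F : ℝ → ℝ := fun r => r ^ c₁ * (1 + r ^ q) ^ c₂ with hF
  set G : ℝ → ℝ := fun r => c₁ * (r ^ (n:ℝ) / (1 + r ^ q) ^ (n:ℝ))
      + (c₁ + c₂ * q) * (r ^ ((n:ℝ) + q) / (1 + r ^ q) ^ (n:ℝ)) with hG
  have hderiv : ∀ r ∈ Ioi (0:ℝ), HasDerivAt F (G r) r := by
    intro r hr
    have hr0 : (0:ℝ) < r := hr
    have hX : (0:ℝ) < 1 + r ^ q := by positivity
    have h1 : HasDerivAt (fun r : ℝ => r ^ c₁) (c₁ * r ^ (c₁ - 1)) r :=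
      Real.hasDerivAt_rpow_const (Or.inl hr0.ne')
    have h3 : HasDerivAt (fun r : ℝ => 1 + r ^ q) (q * r ^ (q - 1)) r :=
      (Real.hasDerivAt_rpow_const (p := q) (Or.inl hr0.ne')).const_add 1
    have h4 : HasDerivAt (fun y : ℝ => y ^ c₂) (c₂ * (1 + r ^ q) ^ (c₂ - 1)) (1 + r ^ q) :=
      Real.hasDerivAt_rpow_const (Or.inl hX.ne')
    have h5 : HasDerivAt (fun r : ℝ => (1 + r ^ q) ^ c₂)
        (c₂ * (1 + r ^ q) ^ (c₂ - 1) * (q * r ^ (q - 1))) r := by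
        have := h4.comp r h3; exact this
    have h6 := h1.mul h5
    have key : c₁ * r ^ (c₁ - 1) * (1 + r ^ q) ^ c₂
        + r ^ c₁ * (c₂ * (1 + r ^ q) ^ (c₂ - 1) * (q * r ^ (q - 1))) = G r := by
      have e1 : r ^ (c₁ - 1) = r ^ (n:ℝ) := by rw [show c₁ - 1 = (n:ℝ) by rw [hc₁]; ring]
      have e2 : (1 + r ^ q) ^ c₂ = (1 + r ^ q) / (1 + r ^ q) ^ (n:ℝ) := by
        rw [show c₂ = 1 - (n:ℝ) from hc₂, Real.rpow_sub hX, Real.rpow_one]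
      have e3 : (1 + r ^ q) ^ (c₂ - 1) = 1 / (1 + r ^ q) ^ (n:ℝ) := by
        rw [show c₂ - 1 = 0 - (n:ℝ) by rw [hc₂]; ring, Real.rpow_sub hX, Real.rpow_zero]
      have e4 : r ^ c₁ * r ^ (q - 1) = r ^ ((n:ℝ) + q) := by
        rw [← Real.rpow_add hr0, show c₁ + (q - 1) = (n:ℝ) + q by rw [hc₁]; ring]
      have e5 : r ^ (n:ℝ) * r ^ q = r ^ ((n:ℝ) + q) := by rw [← Real.rpow_add hr0]
      rw [e1, e2, e3, hG]
      linear_combination (c₂ * q / ((1 + r ^ q) ^ (n:ℝ))) * e4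
        + (c₁ / ((1 + r ^ q) ^ (n:ℝ))) * e5
    exact key ▸ h6
  have hGint : IntegrableOn G (Ioi 0) := (hA.const_mul c₁).add (hB.const_mul (c₁ + c₂ * q))
  have hcont : ContinuousWithinAt F (Ici 0) 0 := by
    have hA0 : ContinuousAt (fun r : ℝ => r ^ c₁) 0 :=
      Real.continuousAt_rpow_const 0 c₁ (Or.inr (by positivity))
    have hB0 : ContinuousAt (fun r : ℝ => (1 + r ^ q) ^ c₂) 0 := by
      have hi : ContinuousAt (fun r : ℝ => 1 + r ^ q) 0 :=
        continuousAt_const.add (Real.continuousAt_rpow_const 0 q (Or.inr hq0.le))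
      exact hi.rpow_const (Or.inl (by simp [Real.zero_rpow hq0.ne']))
    exact (hA0.mul hB0).continuousWithinAt
  have htend : Tendsto F atTop (nhds 0) := by
    have hy : (0:ℝ) < -(c₁ + q * c₂) := by rw [hc₁, hc₂]; nlinarith
    apply squeeze_zero'
    · filter_upwards [eventually_ge_atTop (1:ℝ)] with r hr
      have hr0 : (0:ℝ) < r := lt_of_lt_of_le one_pos hr
      have : (0:ℝ) ≤ 1 + r ^ q := by positivity
      exact mul_nonneg (Real.rpow_nonneg hr0.le _) (Real.rpow_nonneg this _)
    · filter_upwards [eventually_ge_atTop (1:ℝ)] with r hr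
      have hr0 : (0:ℝ) < r := lt_of_lt_of_le one_pos hr
      have h1 : (1 + r ^ q) ^ c₂ ≤ (r ^ q) ^ c₂ :=
        Real.rpow_le_rpow_of_nonpos (by positivity) (by linarith) (by rw [hc₂]; nlinarith)
      calc F r ≤ r ^ c₁ * (r ^ q) ^ c₂ :=
            mul_le_mul_of_nonneg_left h1 (Real.rpow_nonneg hr0.le _)
      _ = r ^ (-(-(c₁ + q * c₂))) := by
          rw [← Real.rpow_mul hr0.le, ← Real.rpow_add hr0, neg_neg]
      _ = (fun r : ℝ => r ^ (-(-(c₁ + q * c₂)))) r := rfl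
    · exact tendsto_rpow_neg_atTop hy
  have hF0 : F 0 = 0 := by
    rw [hF]; simp [Real.zero_rpow (by positivity : c₁ ≠ 0)]
  have := integral_Ioi_of_hasDerivAt_of_tendsto hcont hderiv hGint htend
  rw [hF0, sub_zero] at this
  rw [hG] at this
  rw [integral_add (hA.const_mul c₁) (hB.const_mul (c₁ + c₂ * q)),
    integral_const_mul, integral_const_mul] at this
  calc ((n:ℝ) + 1) * (∫ r in Ioi (0:ℝ), r ^ (n:ℝ) / (1 + r ^ q) ^ (n:ℝ))
      + (((n:ℝ) + 1) - ((n:ℝ) - 1) * q)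
        * (∫ r in Ioi (0:ℝ), r ^ ((n:ℝ) + q) / (1 + r ^ q) ^ (n:ℝ))
      = c₁ * (∫ r in Ioi (0:ℝ), r ^ (n:ℝ) / (1 + r ^ q) ^ (n:ℝ))
      + (c₁ + c₂ * q) * (∫ r in Ioi (0:ℝ), r ^ ((n:ℝ) + q) / (1 + r ^ q) ^ (n:ℝ)) := by
        rw [hc₁, hc₂]; ring
  _ = 0 := this

private lemma oneD_aux (n : ℕ) (p : ℝ) (hn : 4 ≤ n) (hp : 2 < p)
    (hpn : p < ((n:ℝ) + 1) / 2) :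
    0 < ∫ r in Ioi (0:ℝ),
      r ^ (n - 2 : ℕ) * (r ^ (2:ℝ) * (r ^ (p/(p-1)) - (p - 1)) /
        (1 + r ^ (p/(p-1))) ^ (n : ℝ)) := by
  have hn4 : (4:ℝ) ≤ n := by exact_mod_cast hn
  set q : ℝ := p / (p - 1) with hq
  have hp1 : (1:ℝ) < p - 1 := by linarith
  have hq1 : 1 < q := by
    rw [hq, lt_div_iff₀ (by linarith)]; linarith
  have hq0 : (0:ℝ) < q := lt_trans one_pos hq1
  have hqn : (n:ℝ) + 1 < ((n:ℝ) - 1) * q := by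
    have : ((n:ℝ) - 1) * q = ((n:ℝ) - 1) * p / (p - 1) := by rw [hq]; ring
    rw [this, lt_div_iff₀ (by linarith)]
    nlinarith
  have hpq : (p - 1) * q = p := by rw [hq]; field_simp
  have hA : IntegrableOn (fun r : ℝ => r ^ (n:ℝ) / (1 + r ^ q) ^ (n:ℝ)) (Ioi 0) :=
    intOn_aux n q (n:ℝ) (by positivity) (by nlinarith)
  have hB : IntegrableOn (fun r : ℝ => r ^ ((n:ℝ) + q) / (1 + r ^ q) ^ (n:ℝ)) (Ioi 0) :=
    intOn_aux n q ((n:ℝ) + q) (by positivity) (by nlinarith)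
  have hcong : EqOn
      (fun r : ℝ => r ^ (n - 2 : ℕ) * (r ^ (2:ℝ) * (r ^ q - (p - 1)) /
        (1 + r ^ q) ^ (n : ℝ)))
      (fun r : ℝ => r ^ ((n:ℝ) + q) / (1 + r ^ q) ^ (n:ℝ)
        - (p - 1) * (r ^ (n:ℝ) / (1 + r ^ q) ^ (n:ℝ))) (Ioi 0) := by
    intro y hy
    have hy0 : (0:ℝ) < y := hy
    have hy2 : y ^ (n - 2 : ℕ) = y ^ ((n:ℝ) - 2) := by
      rw [← Real.rpow_natCast y (n-2)]
      congr 1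
      push_cast [Nat.cast_sub (show 2 ≤ n by omega)]
      ring
    have e6 : y ^ ((n:ℝ) - 2) * y ^ (2:ℝ) = y ^ (n:ℝ) := by
      rw [← Real.rpow_add hy0]; norm_num
    have e7 : y ^ (n:ℝ) * y ^ q = y ^ ((n:ℝ) + q) := by rw [← Real.rpow_add hy0]
    simp only
    rw [hy2]
    linear_combination ((y ^ q - (p - 1)) / ((1 + y ^ q) ^ (n:ℝ))) * e6
      + (1 / ((1 + y ^ q) ^ (n:ℝ))) * e7
  rw [setIntegral_congr_fun measurableSet_Ioi hcong,
    integral_sub hB (hA.const_mul (p - 1)), integral_const_mul]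
  set A : ℝ := ∫ r in Ioi (0:ℝ), r ^ (n:ℝ) / (1 + r ^ q) ^ (n:ℝ) with hAdef
  set B : ℝ := ∫ r in Ioi (0:ℝ), r ^ ((n:ℝ) + q) / (1 + r ^ q) ^ (n:ℝ) with hBdef
  have hApos : 0 < A := by
    rw [hAdef, setIntegral_pos_iff_support_of_nonneg_ae]
    · have hsub : Ioi (0:ℝ) ⊆
          (Function.support fun r : ℝ => r ^ (n:ℝ) / (1 + r ^ q) ^ (n:ℝ)) ∩ Ioi 0 := by
        intro x hx
        have hx0 : (0:ℝ) < x := hx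
        have h1 : (0:ℝ) < x ^ (n:ℝ) := Real.rpow_pos_of_pos hx0 _
        have h2 : (0:ℝ) < (1 + x ^ q) ^ (n:ℝ) :=
          Real.rpow_pos_of_pos (by nlinarith [Real.rpow_nonneg hx0.le q]) _
        exact ⟨ne_of_gt (div_pos h1 h2), hx⟩
      refine lt_of_lt_of_le ?_ (measure_mono hsub)
      simp [Real.volume_Ioi]
    · filter_upwards [ae_restrict_mem measurableSet_Ioi] with x hx
      have hx0 : (0:ℝ) < x := hx
      exact div_nonneg (Real.rpow_nonneg hx0.le _)
        (Real.rpow_nonneg (by nlinarith [Real.rpow_nonneg hx0.le q]) _)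
    · exact hA
  have hrel : (((n:ℝ) - 1) * q - ((n:ℝ) + 1)) * B = ((n:ℝ) + 1) * A := by
    have := ftc_aux n q hn hq1 hqn
    rw [← hAdef, ← hBdef] at this
    linarith
  have h2 : (((n:ℝ) - 1) * q - ((n:ℝ) + 1)) * (B - (p - 1) * A) = 2 * p * A := by
    linear_combination hrel - ((n:ℝ) - 1) * A * hpq
  by_contra hcon
  push_neg at hcon
  nlinarith [mul_nonpos_of_nonneg_of_nonpos (le_of_lt (by linarith : (0:ℝ) < ((n:ℝ) - 1) * q - ((n:ℝ) + 1))) (by linarith : B - (p-1) * A ≤ 0)]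

theorem stmt_4 (n : ℕ) (p : ℝ) (hn : 4 ≤ n) (hp : 2 < p) (hpn : p < (n + 1) / 2) :
    0 < ∫ z : EuclideanSpace ℝ (Fin (n - 1)),
      ‖z‖ ^ (2 : ℝ) * (‖z‖ ^ (p / (p - 1)) - (p - 1)) /
        (1 + ‖z‖ ^ (p / (p - 1))) ^ (n : ℝ) := by
  haveI : Nonempty (Fin (n - 1)) := ⟨⟨0, by omega⟩⟩
  haveI : Nontrivial (EuclideanSpace ℝ (Fin (n - 1))) := inferInstance
  have hred := integral_fun_norm_addHaar (volume : Measure (EuclideanSpace ℝ (Fin (n - 1))))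
    (fun r : ℝ => r ^ (2:ℝ) * (r ^ (p/(p-1)) - (p - 1)) / (1 + r ^ (p/(p-1))) ^ (n : ℝ))
  rw [hred, finrank_euclideanSpace_fin]
  have h1 : 0 < (n - 1 : ℕ) := by omega
  have h2 : (0:ℝ) < (volume (Metric.ball (0 : EuclideanSpace ℝ (Fin (n - 1))) 1)).toReal :=
    ENNReal.toReal_pos (Metric.measure_ball_pos volume 0 one_pos).ne' measure_ball_lt_top.ne
  have h3 : 0 < ∫ r in Ioi (0:ℝ), r ^ (n - 1 - 1 : ℕ) •
      (r ^ (2:ℝ) * (r ^ (p/(p-1)) - (p - 1)) / (1 + r ^ (p/(p-1))) ^ (n : ℝ)) := by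
    have : n - 1 - 1 = n - 2 := by omega
    rw [this]
    simp only [smul_eq_mul]
    exact oneD_aux n p hn hp (by exact_mod_cast hpn)
  rw [nsmul_eq_mul, smul_eq_mul]
  positivity
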